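/- The less-nondeterminism relation ⊑ on control-language expressions is transitive: if E1 ⊑ E2 and E2 ⊑ E3 then E1 ⊑ E3. -/
import Mathlib


/-- Expressions of the natural-number local language. -/
inductive Expr : Type
  | var (n : ℕ)
  | zero
  | succ (e : Expr)
  | tt
  | ff
deriving DecidableEq

/-- Capture-free substitution `e[x := e']` (there are no binders). -/
def subst : Expr → ℕ → Expr → Expr
  | .var m, x, e => if m = x then e else .var m
  | .zero, _, _ => .zero
  | .succ e', x, e => .succ (subst e' x e)
  | .tt, _, _ => .tt
  | .ff, _, _ => .ff

/-- Free variables of an expression. -/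
def FV : Expr → Finset ℕ
  | .var n => {n}
  | .zero => ∅
  | .succ e => FV e
  | .tt => ∅
  | .ff => ∅

/-- Synchronization labels. -/
inductive Choice : Type
  | L
  | R
deriving DecidableEq

/-- Control-language expressions. Locations and variables are natural numbers. -/
inductive Ctrl : Type
  | var (X : ℕ)
  | funLocal (F x : ℕ) (E : Ctrl)
  | funGlobal (F X : ℕ) (E : Ctrl)
  | appLocal (E : Ctrl) (e : Expr)
  | appGlobal (E1 E2 : Ctrl)
  | unit
  | ret (e : Expr)
  | letRet (x : ℕ) (E1 E2 : Ctrl)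
  | send (e : Expr) (ℓ : ℕ) (E : Ctrl)
  | recv (x : ℕ) (ℓ : ℕ) (E : Ctrl)
  | ite (e : Expr) (E1 E2 : Ctrl)
  | choose (d : Choice) (ℓ : ℕ) (E : Ctrl)
  | allowL (ℓ : ℕ) (E : Ctrl)
  | allowR (ℓ : ℕ) (E : Ctrl)
  | allowLR (ℓ : ℕ) (E1 E2 : Ctrl)
deriving DecidableEq

/-- The partial merge operator on control expressions. -/
def merge : Ctrl → Ctrl → Option Ctrl
  | .var X, .var Y => if X = Y then some (.var X) else none
  | .unit, .unit => some .unit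
  | .ret e, .ret e' => if e = e' then some (.ret e) else none
  | .funLocal F x E, .funLocal F' x' E' =>
      if F = F' ∧ x = x' ∧ E = E' then some (.funLocal F x E) else none
  | .funGlobal F X E, .funGlobal F' X' E' =>
      if F = F' ∧ X = X' ∧ E = E' then some (.funGlobal F X E) else none
  | .appLocal E a, .appLocal E' a' =>
      if a = a' then (merge E E').map (fun M => .appLocal M a) else none
  | .appGlobal E1 E2, .appGlobal E1' E2' => do
      let A ← merge E1 E1'; let B ← merge E2 E2'; pure (.appGlobal A B)
  | .letRet x E1 E2, .letRet x' E1' E2' =>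
      if x = x' then do
        let A ← merge E1 E1'; let B ← merge E2 E2'; pure (.letRet x A B)
      else none
  | .send e ℓ E, .send e' ℓ' E' =>
      if e = e' ∧ ℓ = ℓ' then (merge E E').map (fun M => .send e ℓ M) else none
  | .recv x ℓ E, .recv x' ℓ' E' =>
      if x = x' ∧ ℓ = ℓ' then (merge E E').map (fun M => .recv x ℓ M) else none
  | .ite e E1 E2, .ite e' E1' E2' =>
      if e = e' then do
        let A ← merge E1 E1'; let B ← merge E2 E2'; pure (.ite e A B)
      else none
  | .choose d ℓ E, .choose d' ℓ' E' =>
      if d = d' ∧ ℓ = ℓ' then (merge E E').map (fun M => .choose d ℓ M) else none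
  | .allowL ℓ E, .allowL ℓ' E' =>
      if ℓ = ℓ' then (merge E E').map (fun M => .allowL ℓ M) else none
  | .allowL ℓ E, .allowR ℓ' E' =>
      if ℓ = ℓ' then some (.allowLR ℓ E E') else none
  | .allowL ℓ E, .allowLR ℓ' E1' E2' =>
      if ℓ = ℓ' then (merge E E1').map (fun M => .allowLR ℓ M E2') else none
  | .allowR ℓ E, .allowL ℓ' E' =>
      if ℓ = ℓ' then some (.allowLR ℓ E' E) else none
  | .allowR ℓ E, .allowR ℓ' E' =>
      if ℓ = ℓ' then (merge E E').map (fun M => .allowR ℓ M) else none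
  | .allowR ℓ E, .allowLR ℓ' E1' E2' =>
      if ℓ = ℓ' then (merge E E2').map (fun M => .allowLR ℓ E1' M) else none
  | .allowLR ℓ E1 E2, .allowL ℓ' E' =>
      if ℓ = ℓ' then (merge E1 E').map (fun M => .allowLR ℓ M E2) else none
  | .allowLR ℓ E1 E2, .allowR ℓ' E' =>
      if ℓ = ℓ' then (merge E2 E').map (fun M => .allowLR ℓ E1 M) else none
  | .allowLR ℓ E1 E2, .allowLR ℓ' E1' E2' =>
      if ℓ = ℓ' then do
        let A ← merge E1 E1'; let B ← merge E2 E2'; pure (.allowLR ℓ A B)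
      else none
  | _, _ => none

/-- Substitution of a local expression `e` for the local variable `x`
    throughout a control expression (respecting local-variable binders). -/
def substCtrl : Ctrl → ℕ → Expr → Ctrl
  | .var X, _, _ => .var X
  | .funLocal F y E, x, e => .funLocal F y (if y = x then E else substCtrl E x e)
  | .funGlobal F X E, x, e => .funGlobal F X (substCtrl E x e)
  | .appLocal E a, x, e => .appLocal (substCtrl E x e) (subst a x e)
  | .appGlobal E1 E2, x, e => .appGlobal (substCtrl E1 x e) (substCtrl E2 x e)
  | .unit, _, _ => .unit
  | .ret a, x, e => .ret (subst a x e)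
  | .letRet y E1 E2, x, e =>
      .letRet y (substCtrl E1 x e) (if y = x then E2 else substCtrl E2 x e)
  | .send a ℓ E, x, e => .send (subst a x e) ℓ (substCtrl E x e)
  | .recv y ℓ E, x, e => .recv y ℓ (if y = x then E else substCtrl E x e)
  | .ite a E1 E2, x, e => .ite (subst a x e) (substCtrl E1 x e) (substCtrl E2 x e)
  | .choose d ℓ E, x, e => .choose d ℓ (substCtrl E x e)
  | .allowL ℓ E, x, e => .allowL ℓ (substCtrl E x e)
  | .allowR ℓ E, x, e => .allowR ℓ (substCtrl E x e)
  | .allowLR ℓ E1 E2, x, e => .allowLR ℓ (substCtrl E1 x e) (substCtrl E2 x e)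

/-- Substitution of a control expression for a control variable. -/
def substV : Ctrl → ℕ → Ctrl → Ctrl
  | .var Y, X, V => if Y = X then V else .var Y
  | .funLocal F y E, X, V => .funLocal F y (if F = X then E else substV E X V)
  | .funGlobal F Y E, X, V =>
      .funGlobal F Y (if F = X ∨ Y = X then E else substV E X V)
  | .appLocal E a, X, V => .appLocal (substV E X V) a
  | .appGlobal E1 E2, X, V => .appGlobal (substV E1 X V) (substV E2 X V)
  | .unit, _, _ => .unit
  | .ret a, _, _ => .ret a
  | .letRet y E1 E2, X, V => .letRet y (substV E1 X V) (substV E2 X V)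
  | .send a ℓ E, X, V => .send a ℓ (substV E X V)
  | .recv y ℓ E, X, V => .recv y ℓ (substV E X V)
  | .ite a E1 E2, X, V => .ite a (substV E1 X V) (substV E2 X V)
  | .choose d ℓ E, X, V => .choose d ℓ (substV E X V)
  | .allowL ℓ E, X, V => .allowL ℓ (substV E X V)
  | .allowR ℓ E, X, V => .allowR ℓ (substV E X V)
  | .allowLR ℓ E1 E2, X, V => .allowLR ℓ (substV E1 X V) (substV E2 X V)

/-- The less-nondeterminism relation `⊑` on control expressions. -/
inductive LND : Ctrl → Ctrl → Prop
  | var {X} : LND (.var X) (.var X)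
  | unit : LND .unit .unit
  | ret {e} : LND (.ret e) (.ret e)
  | funLocal {F x E} : LND (.funLocal F x E) (.funLocal F x E)
  | funGlobal {F X E} : LND (.funGlobal F X E) (.funGlobal F X E)
  | appLocal {E1 E2 e} : LND E1 E2 → LND (.appLocal E1 e) (.appLocal E2 e)
  | appGlobal {E11 E12 E21 E22} :
      LND E11 E21 → LND E12 E22 → LND (.appGlobal E11 E12) (.appGlobal E21 E22)
  | letRet {x E11 E12 E21 E22} :
      LND E11 E21 → LND E12 E22 → LND (.letRet x E11 E12) (.letRet x E21 E22)
  | send {e ℓ E1 E2} : LND E1 E2 → LND (.send e ℓ E1) (.send e ℓ E2)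
  | recv {x ℓ E1 E2} : LND E1 E2 → LND (.recv x ℓ E1) (.recv x ℓ E2)
  | ite {e E11 E12 E21 E22} :
      LND E11 E21 → LND E12 E22 → LND (.ite e E11 E12) (.ite e E21 E22)
  | choose {d ℓ E1 E2} : LND E1 E2 → LND (.choose d ℓ E1) (.choose d ℓ E2)
  | allowL {ℓ E1 E2} : LND E1 E2 → LND (.allowL ℓ E1) (.allowL ℓ E2)
  | allowR {ℓ E1 E2} : LND E1 E2 → LND (.allowR ℓ E1) (.allowR ℓ E2)
  | allowLR {ℓ E11 E12 E21 E22} :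
      LND E11 E21 → LND E12 E22 → LND (.allowLR ℓ E11 E12) (.allowLR ℓ E21 E22)
  | allowL_LR {ℓ E1 E21 E22} : LND E1 E21 → LND (.allowL ℓ E1) (.allowLR ℓ E21 E22)
  | allowR_LR {ℓ E1 E21 E22} : LND E1 E22 → LND (.allowR ℓ E1) (.allowLR ℓ E21 E22)

/-- Control-language values, relative to a notion `eval` of local values. -/
inductive CtrlVal (eval : Expr → Prop) : Ctrl → Prop
  | unit : CtrlVal eval .unit
  | ret {v} : eval v → CtrlVal eval (.ret v)
  | funLocal {F x E} : CtrlVal eval (.funLocal F x E)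
  | funGlobal {F X E} : CtrlVal eval (.funGlobal F X E)

/-- Labels for the control-language labeled transition system. -/
inductive Label : Type
  | tau
  | sendl (v : Expr) (ℓ : ℕ)
  | recvl (ℓ : ℕ) (v : Expr)
  | choosel (d : Choice) (ℓ : ℕ)
  | allow (ℓ : ℕ) (d : Choice)
  | syncTau
  | fn (l : Label)
  | arg (l : Label)

/-- The labeled operational semantics of control expressions, generic over
    the step relation `estep` and value predicate `eval` of the local language. -/
inductive CStep (estep : Expr → Expr → Prop) (eval : Expr → Prop) :
    Label → Ctrl → Ctrl → Prop
  | retE {e1 e2} : estep e1 e2 → CStep estep eval .tau (.ret e1) (.ret e2)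
  | ifE {e1 e2 E1 E2} :
      estep e1 e2 → CStep estep eval .tau (.ite e1 E1 E2) (.ite e2 E1 E2)
  | ifTrue {E1 E2} : CStep estep eval .tau (.ite .tt E1 E2) E1
  | ifFalse {E1 E2} : CStep estep eval .tau (.ite .ff E1 E2) E2
  | sendE {e1 e2 ℓ E} :
      estep e1 e2 → CStep estep eval .tau (.send e1 ℓ E) (.send e2 ℓ E)
  | sendV {v ℓ E} : eval v → CStep estep eval (.sendl v ℓ) (.send v ℓ E) E
  | recvV {v x ℓ E} :
      eval v → CStep estep eval (.recvl ℓ v) (.recv x ℓ E) (substCtrl E x v)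
  | choose {d ℓ E} : CStep estep eval (.choosel d ℓ) (.choose d ℓ E) E
  | allowLRL {ℓ E1 E2} : CStep estep eval (.allow ℓ .L) (.allowLR ℓ E1 E2) E1
  | allowLRR {ℓ E1 E2} : CStep estep eval (.allow ℓ .R) (.allowLR ℓ E1 E2) E2
  | allowLOnly {ℓ E} : CStep estep eval (.allow ℓ .L) (.allowL ℓ E) E
  | allowROnly {ℓ E} : CStep estep eval (.allow ℓ .R) (.allowR ℓ E) E
  | letRetArg {l x E1 E1' E2} :
      CStep estep eval l E1 E1' →
      CStep estep eval (.arg l) (.letRet x E1 E2) (.letRet x E1' E2)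
  | letRetV {v x E2} :
      eval v → CStep estep eval .syncTau (.letRet x (.ret v) E2) (substCtrl E2 x v)
  | appLocalFun {l F1 F2 e} :
      CStep estep eval l F1 F2 →
      CStep estep eval (.fn l) (.appLocal F1 e) (.appLocal F2 e)
  | appLocalArg {F e1 e2} :
      estep e1 e2 → CStep estep eval .tau (.appLocal F e1) (.appLocal F e2)
  | appLocalV {F x E v} :
      eval v →
      CStep estep eval .syncTau (.appLocal (.funLocal F x E) v) (substCtrl E x v)
  | appGlobalFun {l F1 F2 A} :
      CStep estep eval l F1 F2 →
      CStep estep eval (.fn l) (.appGlobal F1 A) (.appGlobal F2 A)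
  | appGlobalArg {l F A1 A2} :
      CStep estep eval l A1 A2 →
      CStep estep eval (.arg l) (.appGlobal F A1) (.appGlobal F A2)
  | appGlobalV {F X E V} :
      CtrlVal eval V →
      CStep estep eval .syncTau (.appGlobal (.funGlobal F X E) V) (substV E X V)

/-- The less-nondeterminism relation is transitive. -/
theorem lnd_trans {E1 E2 E3 : Ctrl} (h1 : LND E1 E2) (h2 : LND E2 E3) :
    LND E1 E3 := by
  induction h1 generalizing E3 with
  | var => exact h2
  | unit => exact h2
  | ret => exact h2
  | funLocal => exact h2
  | funGlobal => exact h2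
  | appLocal _ ih => cases h2 with | appLocal h => exact .appLocal (ih h)
  | appGlobal _ _ ih1 ih2 => cases h2 with | appGlobal a b => exact .appGlobal (ih1 a) (ih2 b)
  | letRet _ _ ih1 ih2 => cases h2 with | letRet a b => exact .letRet (ih1 a) (ih2 b)
  | send _ ih => cases h2 with | send h => exact .send (ih h)
  | recv _ ih => cases h2 with | recv h => exact .recv (ih h)
  | ite _ _ ih1 ih2 => cases h2 with | ite a b => exact .ite (ih1 a) (ih2 b)
  | choose _ ih => cases h2 with | choose h => exact .choose (ih h)
  | allowL _ ih =>
      cases h2 with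
      | allowL h => exact .allowL (ih h)
      | allowL_LR h => exact .allowL_LR (ih h)
  | allowR _ ih =>
      cases h2 with
      | allowR h => exact .allowR (ih h)
      | allowR_LR h => exact .allowR_LR (ih h)
  | allowLR _ _ ih1 ih2 => cases h2 with | allowLR a b => exact .allowLR (ih1 a) (ih2 b)
  | allowL_LR _ ih => cases h2 with | allowLR a b => exact .allowL_LR (ih a)
  | allowR_LR _ ih => cases h2 with | allowLR a b => exact .allowR_LR (ih b)
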